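/- (Corollary 1, boundedness; case f = 0.) Set h̃_τ := [‖u(0)‖ + ∫_0^τ α(ξ)·ν(ξ)·‖u(ξ−τ)‖^p dξ]/ν(τ) and assume h̃_τ > 0. Assume the improper integral I := ∫_τ^∞ α(ξ)·σ(ξ)^p·ν(ξ)^{1−p} dξ converges, (h̃_τ·ν(τ))^{1−p} > (p−1)·I, and sup_{t ≥ 0} ∫_0^t γ(ξ) dξ < ∞. Then u is bounded on [−τ, ∞), i.e., sup_{t ≥ −τ} ‖u(t)‖ < ∞. -/

import Mathlib

/-!
Multiplying by the integrating factor `ν` turns the comparison of `‖u‖` with `h` into a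
monotonicity statement on each delay interval `[nτ, (n+1)τ]`, so `‖u‖ ≤ h` on `[-τ, ∞)`.
For `g = ν h` the delay equation becomes `g' = α ν h(t-τ)^p ≥ 0`, so `g` is nondecreasing and,
since `σ(t) = ν(t) / ν(t-τ)`, `g' = J g(t-τ)^p ≤ J g^p` with `J = α σ^p ν^(1-p)`. Integrating
`(g^(1-p))' ≥ -(p-1) J` from `τ`, where `g(τ) = h̃_τ ν(τ)`, gives the Bihari bound
`g^(1-p) ≥ (h̃_τ ν(τ))^(1-p) - (p-1) I > 0`. Finally `h = g / ν = g exp(∫₀ᵗ γ)` is bounded because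
`∫₀ᵗ γ` is bounded above.
-/

open Real MeasureTheory Set Filter ComplexInnerProductSpace

/-- `ν(t) = exp(−∫₀ᵗ γ(ξ) dξ)`. -/
noncomputable def nu (γ : ℝ → ℝ) (t : ℝ) : ℝ := Real.exp (-∫ ξ in (0:ℝ)..t, γ ξ)

/-- `σ(t) = exp(−∫_{t−τ}^t γ(ξ) dξ)`. -/
noncomputable def sig (γ : ℝ → ℝ) (τ t : ℝ) : ℝ :=
  Real.exp (-∫ ξ in (t - τ)..t, γ ξ)

section Nu

variable {γ : ℝ → ℝ}

theorem nu_pos (γ : ℝ → ℝ) (t : ℝ) : 0 < nu γ t := exp_pos _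

theorem nu_zero (γ : ℝ → ℝ) : nu γ 0 = 1 := by simp [nu]

theorem nu_mul_exp_integral (γ : ℝ → ℝ) (t : ℝ) : nu γ t * exp (∫ ξ in (0:ℝ)..t, γ ξ) = 1 := by
  rw [nu, ← exp_add, neg_add_cancel, exp_zero]

theorem hasDerivAt_nu (hγ : Continuous γ) (t : ℝ) : HasDerivAt (nu γ) (-γ t * nu γ t) t :=
  ((hγ.integral_hasStrictDerivAt 0 t).hasDerivAt.neg).exp.congr_deriv
    (by rw [nu, Pi.neg_apply]; ring)

theorem continuous_nu (hγ : Continuous γ) : Continuous (nu γ) :=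
  continuous_iff_continuousAt.2 fun t => (hasDerivAt_nu hγ t).continuousAt

theorem sig_eq_nu_div (hγ : Continuous γ) (τ t : ℝ) : sig γ τ t = nu γ t / nu γ (t - τ) := by
  rw [sig, nu, nu, ← exp_sub, ← intervalIntegral.integral_interval_sub_left
    (hγ.intervalIntegrable 0 t) (hγ.intervalIntegrable 0 (t - τ))]
  ring_nf

theorem sig_rpow_mul_nu_rpow (hγ : Continuous γ) {τ p x : ℝ} (t : ℝ) (hx : 0 ≤ x) :
    sig γ τ t ^ p * nu γ t ^ (1 - p) * (nu γ (t - τ) * x) ^ p = nu γ t * x ^ p := by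
  have hν := (nu_pos γ (t - τ)).le
  have hsplit : nu γ t ^ p * nu γ t ^ (1 - p) = nu γ t := by
    rw [← rpow_add (nu_pos γ t), add_sub_cancel, rpow_one]
  rw [sig_eq_nu_div hγ, div_rpow (nu_pos γ t).le hν, mul_rpow hν hx]
  calc _ = nu γ t ^ p * nu γ t ^ (1 - p) * x ^ p * (nu γ (t - τ) ^ p / nu γ (t - τ) ^ p) := by
        ring
    _ = nu γ t * x ^ p := by rw [hsplit, div_self (rpow_pos_of_pos (nu_pos γ _) p).ne', mul_one]

end Nu

section Comparison

variable {τ p : ℝ} {γ α φ φ' ψ ψ' : ℝ → ℝ}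

theorem delay_comparison_step (hτ : 0 ≤ τ) (hp : 0 ≤ p) (hγ : Continuous γ)
    (hα : ∀ t, 0 ≤ α t) (hφ0 : ∀ t, -τ ≤ t → 0 ≤ φ t)
    (hφc : ContinuousOn φ (Ici (-τ))) (hψc : ContinuousOn ψ (Ici (-τ)))
    (hφd : ∀ t, 0 < t → HasDerivAt φ (φ' t) t) (hψd : ∀ t, 0 < t → HasDerivAt ψ (ψ' t) t)
    (hφ' : ∀ t, 0 < t → φ' t ≤ γ t * φ t + α t * φ (t - τ) ^ p)
    (hψ' : ∀ t, 0 < t → γ t * ψ t + α t * ψ (t - τ) ^ p ≤ ψ' t)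
    {a : ℝ} (ha : 0 ≤ a) (hle : ∀ t, -τ ≤ t → t ≤ a → φ t ≤ ψ t)
    {t : ℝ} (hat : a ≤ t) (hta : t ≤ a + τ) : φ t ≤ ψ t := by
  have hsub : Icc a t ⊆ Ici (-τ) := fun x hx => le_trans (by linarith) hx.1
  have hmono : MonotoneOn (fun s => nu γ s * (ψ s - φ s)) (Icc a t) := by
    refine monotoneOn_of_hasDerivWithinAt_nonneg (convex_Icc a t)
      ((continuous_nu hγ).continuousOn.mul ((hψc.sub hφc).mono hsub))
      (f' := fun x => -γ x * nu γ x * (ψ x - φ x) + nu γ x * (ψ' x - φ' x)) ?_ ?_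
    · rw [interior_Icc]
      intro x hx
      exact ((hasDerivAt_nu hγ x).mul ((hψd x (ha.trans_lt hx.1)).sub
        (hφd x (ha.trans_lt hx.1)))).hasDerivWithinAt
    · rw [interior_Icc]
      intro x hx
      have hx0 : 0 < x := ha.trans_lt hx.1
      have hdelay : α x * φ (x - τ) ^ p ≤ α x * ψ (x - τ) ^ p :=
        mul_le_mul_of_nonneg_left (rpow_le_rpow (hφ0 _ (by linarith))
          (hle _ (by linarith) (by linarith [hx.2])) hp) (hα x)
      have hφx := hφ' x hx0
      have hψx := hψ' x hx0
      have : 0 ≤ (ψ' x - γ x * ψ x) - (φ' x - γ x * φ x) := by linarith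
      calc (0 : ℝ) ≤ nu γ x * ((ψ' x - γ x * ψ x) - (φ' x - γ x * φ x)) :=
            mul_nonneg (nu_pos γ x).le this
        _ = _ := by ring
  have hw := hmono (left_mem_Icc.2 hat) (right_mem_Icc.2 hat) hat
  have ha' : 0 ≤ nu γ a * (ψ a - φ a) :=
    mul_nonneg (nu_pos γ a).le (sub_nonneg.2 (hle a (by linarith) le_rfl))
  exact sub_nonneg.1 ((mul_nonneg_iff_of_pos_left (nu_pos γ t)).1 (ha'.trans hw))

theorem delay_comparison (hτ : 0 < τ) (hp : 0 ≤ p) (hγ : Continuous γ)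
    (hα : ∀ t, 0 ≤ α t) (hφ0 : ∀ t, -τ ≤ t → 0 ≤ φ t)
    (hφc : ContinuousOn φ (Ici (-τ))) (hψc : ContinuousOn ψ (Ici (-τ)))
    (hφd : ∀ t, 0 < t → HasDerivAt φ (φ' t) t) (hψd : ∀ t, 0 < t → HasDerivAt ψ (ψ' t) t)
    (hφ' : ∀ t, 0 < t → φ' t ≤ γ t * φ t + α t * φ (t - τ) ^ p)
    (hψ' : ∀ t, 0 < t → γ t * ψ t + α t * ψ (t - τ) ^ p ≤ ψ' t)
    (hinit : ∀ t, -τ ≤ t → t ≤ 0 → φ t ≤ ψ t) {t : ℝ} (ht : -τ ≤ t) : φ t ≤ ψ t := by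
  have hsteps : ∀ n : ℕ, ∀ t, -τ ≤ t → t ≤ n * τ → φ t ≤ ψ t := by
    intro n
    induction n with
    | zero => simpa using hinit
    | succ n ih =>
      intro t ht htn
      rcases le_total t (n * τ) with h | h
      · exact ih t ht h
      · exact delay_comparison_step hτ.le hp hγ hα hφ0 hφc hψc hφd hψd hφ' hψ' (by positivity)
          ih h (by push_cast at htn; linarith)
  obtain ⟨n, hn⟩ := exists_nat_ge (t / τ)
  exact hsteps n t ht ((div_le_iff₀ hτ).1 hn)

end Comparison

section NormDeriv

variable {𝕜 H : Type*} [RCLike 𝕜] [NormedAddCommGroup H] [InnerProductSpace 𝕜 H]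
  [NormedSpace ℝ H]

theorem norm_mul_eq_re_inner_of_hasDerivAt {u : ℝ → H} {u' : H} {D t : ℝ}
    (hu : HasDerivAt u u' t) (hD : HasDerivAt (fun s => ‖u s‖) D t) :
    ‖u t‖ * D = RCLike.re (inner 𝕜 (u t) u') := by
  have h₁ : HasDerivAt (fun s => ‖u s‖ ^ 2) (2 * ‖u t‖ ^ 1 * D) t := hD.pow 2
  have h₂ : HasDerivAt (fun s => ‖u s‖ ^ 2) (2 * RCLike.re (inner 𝕜 (u t) u')) t := by
    have := (RCLike.reCLM.hasFDerivAt.comp_hasDerivAt t (hu.inner 𝕜 hu))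
    simp only [Function.comp_def, RCLike.reCLM_apply, inner_self_eq_norm_sq] at this
    have hre : RCLike.re (inner 𝕜 (u t) u' + inner 𝕜 u' (u t)) =
        2 * RCLike.re (inner 𝕜 (u t) u') := by
      rw [map_add, ← inner_conj_symm (u t) u', RCLike.conj_re]; ring
    exact hre ▸ this
  linarith [h₁.unique h₂]

theorem deriv_norm_le_of_re_inner_le {u : ℝ → H} {u' : H} {D t c b : ℝ}
    (hu : HasDerivAt u u' t) (hD : HasDerivAt (fun s => ‖u s‖) D t) (hb : 0 ≤ b)
    (hineq : RCLike.re (inner 𝕜 (u t) u') ≤ c * ‖u t‖ ^ 2 + b * ‖u t‖) :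
    D ≤ c * ‖u t‖ + b := by
  rcases (norm_nonneg (u t)).eq_or_lt with h0 | hpos
  · have hmin : IsLocalMin (fun s => ‖u s‖) t :=
      Eventually.of_forall fun s => by simp only [← h0, norm_nonneg]
    rw [hmin.hasDerivAt_eq_zero hD, ← h0]
    linarith
  · refine le_of_mul_le_mul_left ?_ hpos
    rw [norm_mul_eq_re_inner_of_hasDerivAt (𝕜 := 𝕜) hu hD]
    linarith

theorem norm_le_of_re_inner_le_delay {τ p : ℝ} {γ α ψ ψ' : ℝ → ℝ} (hτ : 0 < τ) (hp : 0 ≤ p)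
    (hγ : Continuous γ) (hα : ∀ t, 0 ≤ α t) {u u' : ℝ → H} (huc : ContinuousOn u (Ici (-τ)))
    (hud : ∀ t, 0 < t → HasDerivAt u (u' t) t)
    (hnd : ∀ t, 0 < t → DifferentiableAt ℝ (fun s => ‖u s‖) t)
    (huineq : ∀ t, 0 < t → RCLike.re (inner 𝕜 (u t) (u' t)) ≤
      γ t * ‖u t‖ ^ 2 + α t * ‖u t‖ * ‖u (t - τ)‖ ^ p)
    (hψc : ContinuousOn ψ (Ici (-τ))) (hψd : ∀ t, 0 < t → HasDerivAt ψ (ψ' t) t)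
    (hψ' : ∀ t, 0 < t → γ t * ψ t + α t * ψ (t - τ) ^ p ≤ ψ' t)
    (hinit : ∀ t, -τ ≤ t → t ≤ 0 → ‖u t‖ ≤ ψ t) {t : ℝ} (ht : -τ ≤ t) : ‖u t‖ ≤ ψ t :=
  delay_comparison hτ hp hγ hα (fun t _ => norm_nonneg (u t)) huc.norm hψc
    (fun t ht => (hnd t ht).hasDerivAt) hψd
    (fun t ht => deriv_norm_le_of_re_inner_le (hud t ht) (hnd t ht).hasDerivAt
      (mul_nonneg (hα t) (rpow_nonneg (norm_nonneg _) p)) ((huineq t ht).trans_eq (by ring)))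
    hψ' hinit ht

end NormDeriv

theorem rpow_one_sub_ge_of_deriv_le {a p : ℝ} (hp : 1 < p) {g g' J : ℝ → ℝ}
    (hgc : ContinuousOn g (Ici a)) (hgd : ∀ t, a < t → HasDerivAt g (g' t) t)
    (hg0 : ∀ t, a ≤ t → 0 < g t) (hJ : IntegrableOn J (Ici a)) (hJ0 : ∀ t, a ≤ t → 0 ≤ J t)
    (hg' : ∀ t, a < t → g' t ≤ J t * g t ^ p) {t : ℝ} (ht : a ≤ t) :
    g a ^ (1 - p) - (p - 1) * ∫ ξ in Ici a, J ξ ≤ g t ^ (1 - p) := by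
  have hFTC : ∫ ξ in a..t, -(p - 1) * J ξ ≤ g t ^ (1 - p) - g a ^ (1 - p) := by
    refine intervalIntegral.integral_le_sub_of_hasDeriv_right_of_le ht
      ((hgc.mono Icc_subset_Ici_self).rpow_const fun x hx => Or.inl (hg0 x hx.1).ne')
      (fun x hx => ((hgd x hx.1).rpow_const (Or.inl (hg0 x hx.1.le).ne')).hasDerivWithinAt)
      ((hJ.mono_set Icc_subset_Ici_self).const_mul _) fun x hx => ?_
    have hgx := hg0 x hx.1.le
    have hcancel : g x ^ p * g x ^ (1 - p - 1) = 1 := by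
      rw [← rpow_add hgx]; norm_num
    have := mul_le_mul_of_nonneg_right (hg' x hx.1) (rpow_nonneg hgx.le (1 - p - 1))
    rw [mul_assoc, hcancel, mul_one] at this
    nlinarith
  have hJt : ∫ ξ in a..t, J ξ ≤ ∫ ξ in Ici a, J ξ := by
    rw [intervalIntegral.integral_of_le ht]
    exact setIntegral_mono_set hJ ((ae_restrict_iff' measurableSet_Ici).2 (.of_forall hJ0))
      (Ioc_subset_Icc_self.trans Icc_subset_Ici_self).eventuallyLE
  rw [intervalIntegral.integral_const_mul] at hFTC
  nlinarith

section DelaySolution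

variable {τ p : ℝ} {γ α h : ℝ → ℝ}

theorem hasDerivAt_nu_mul_of_delay (hγ : Continuous γ)
    (hhd : ∀ t, 0 < t → HasDerivAt h (γ t * h t + α t * h (t - τ) ^ p) t) {t : ℝ} (ht : 0 < t) :
    HasDerivAt (fun s => nu γ s * h s) (α t * nu γ t * h (t - τ) ^ p) t :=
  ((hasDerivAt_nu hγ t).mul (hhd t ht)).congr_deriv (by ring)

theorem monotoneOn_nu_mul_of_delay (hτ : 0 ≤ τ) (hγ : Continuous γ) (hα : ∀ t, 0 ≤ α t)
    (hh0 : ∀ t, -τ ≤ t → 0 ≤ h t) (hhc : ContinuousOn h (Ici (-τ)))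
    (hhd : ∀ t, 0 < t → HasDerivAt h (γ t * h t + α t * h (t - τ) ^ p) t) :
    MonotoneOn (fun s => nu γ s * h s) (Ici 0) := by
  refine monotoneOn_of_hasDerivWithinAt_nonneg (convex_Ici 0)
    ((continuous_nu hγ).continuousOn.mul (hhc.mono (Ici_subset_Ici.2 (by linarith))))
    (f' := fun t => α t * nu γ t * h (t - τ) ^ p) ?_ ?_ <;> rw [interior_Ici] <;> intro t ht
  · exact (hasDerivAt_nu_mul_of_delay hγ hhd ht).hasDerivWithinAt
  · exact mul_nonneg (mul_nonneg (hα t) (nu_pos γ t).le)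
      (rpow_nonneg (hh0 _ (by linarith [ht.out])) p)

theorem nu_mul_eq_add_integral_of_delay (hτ : 0 ≤ τ) (hγ : Continuous γ) (hα : ∀ t, 0 ≤ α t)
    (hh0 : ∀ t, -τ ≤ t → 0 ≤ h t) (hhc : ContinuousOn h (Ici (-τ)))
    (hhd : ∀ t, 0 < t → HasDerivAt h (γ t * h t + α t * h (t - τ) ^ p) t) :
    nu γ τ * h τ = h 0 + ∫ ξ in (0 : ℝ)..τ, α ξ * nu γ ξ * h (ξ - τ) ^ p := by
  have hc : ContinuousOn (fun s => nu γ s * h s) (Icc 0 τ) :=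
    (continuous_nu hγ).continuousOn.mul (hhc.mono fun x hx => show -τ ≤ x by linarith [hx.1])
  have hd : ∀ x ∈ Ioo 0 τ, HasDerivAt (fun s => nu γ s * h s) (α x * nu γ x * h (x - τ) ^ p) x :=
    fun x hx => hasDerivAt_nu_mul_of_delay hγ hhd hx.1
  have hint := intervalIntegral.integrableOn_deriv_of_nonneg hc hd fun x hx =>
    mul_nonneg (mul_nonneg (hα x) (nu_pos γ x).le) (rpow_nonneg (hh0 _ (by linarith [hx.1])) p)
  rw [intervalIntegral.integral_eq_sub_of_hasDerivAt_of_le hτ hc hd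
    ((intervalIntegrable_iff_integrableOn_Ioc_of_le hτ).2 hint), nu_zero, one_mul]
  ring

theorem nu_mul_le_of_delay (hτ : 0 < τ) (hp : 1 < p) (hγ : Continuous γ) (hα : ∀ t, 0 ≤ α t)
    (hh0 : ∀ t, -τ ≤ t → 0 ≤ h t) (hhc : ContinuousOn h (Ici (-τ)))
    (hhd : ∀ t, 0 < t → HasDerivAt h (γ t * h t + α t * h (t - τ) ^ p) t) (hpos : 0 < h τ)
    (hint : IntegrableOn (fun ξ => α ξ * sig γ τ ξ ^ p * nu γ ξ ^ (1 - p)) (Ici τ))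
    (hcond : (p - 1) * ∫ ξ in Ici τ, α ξ * sig γ τ ξ ^ p * nu γ ξ ^ (1 - p) <
      (nu γ τ * h τ) ^ (1 - p)) {t : ℝ} (ht : τ ≤ t) :
    nu γ t * h t ≤ ((nu γ τ * h τ) ^ (1 - p) -
      (p - 1) * ∫ ξ in Ici τ, α ξ * sig γ τ ξ ^ p * nu γ ξ ^ (1 - p)) ^ (1 - p)⁻¹ := by
  set g := fun s => nu γ s * h s
  have hmono : MonotoneOn g (Ici 0) := monotoneOn_nu_mul_of_delay hτ.le hγ hα hh0 hhc hhd
  have hg0 : ∀ t, τ ≤ t → 0 < g t := fun t ht => (mul_pos (nu_pos γ τ) hpos).trans_le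
    (hmono (mem_Ici.2 hτ.le) (mem_Ici.2 (hτ.le.trans ht)) ht)
  have hJ0 : ∀ t, 0 ≤ α t * sig γ τ t ^ p * nu γ t ^ (1 - p) := fun t =>
    mul_nonneg (mul_nonneg (hα t) (rpow_nonneg (exp_pos _).le p)) (rpow_nonneg (nu_pos γ t).le _)
  have hg' : ∀ t, τ < t → α t * nu γ t * h (t - τ) ^ p ≤
      α t * sig γ τ t ^ p * nu γ t ^ (1 - p) * g t ^ p := by
    intro t ht
    have hdelay : 0 ≤ h (t - τ) := hh0 _ (by linarith)
    calc α t * nu γ t * h (t - τ) ^ p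
        = α t * sig γ τ t ^ p * nu γ t ^ (1 - p) * g (t - τ) ^ p := by
          rw [mul_assoc, ← sig_rpow_mul_nu_rpow hγ t hdelay]; ring
      _ ≤ _ := mul_le_mul_of_nonneg_left (rpow_le_rpow (mul_nonneg (nu_pos γ _).le hdelay)
          (hmono (mem_Ici.2 (by linarith)) (mem_Ici.2 (by linarith)) (by linarith)) (by linarith))
          (hJ0 t)
  have hlow := rpow_one_sub_ge_of_deriv_le hp (g := g)
    ((continuous_nu hγ).continuousOn.mul (hhc.mono (Ici_subset_Ici.2 (by linarith))))
    (fun t ht => hasDerivAt_nu_mul_of_delay hγ hhd (hτ.trans ht)) hg0 hint (fun t _ => hJ0 t)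
    hg' ht
  calc g t = (g t ^ (1 - p)) ^ (1 - p)⁻¹ := (rpow_rpow_inv (hg0 t ht).le (by linarith)).symm
    _ ≤ _ := rpow_le_rpow_of_nonpos (by linarith) hlow (inv_nonpos.2 (by linarith))

theorem exists_bound_of_nu_mul_le (hτ : 0 ≤ τ) (hhc : ContinuousOn h (Ici (-τ))) {C : ℝ}
    (hC : 0 ≤ C) (hg : ∀ t, τ ≤ t → nu γ t * h t ≤ C)
    (hM : BddAbove {x : ℝ | ∃ t, 0 ≤ t ∧ x = ∫ ξ in (0 : ℝ)..t, γ ξ}) :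
    ∃ B : ℝ, ∀ t, -τ ≤ t → h t ≤ B := by
  obtain ⟨M, hM⟩ := hM
  obtain ⟨K, hK⟩ := isCompact_Icc.exists_bound_of_continuousOn
    (hhc.mono (Icc_subset_Ici_self : Icc (-τ) τ ⊆ _))
  refine ⟨max K (C * exp M), fun t ht => ?_⟩
  rcases le_total t τ with htτ | hτt
  · exact (le_abs_self _).trans ((hK t ⟨ht, htτ⟩).trans (le_max_left _ _))
  · calc h t = nu γ t * h t * exp (∫ ξ in (0 : ℝ)..t, γ ξ) := by
          rw [mul_right_comm, nu_mul_exp_integral, one_mul]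
      _ ≤ C * exp M := mul_le_mul (hg t hτt) (exp_le_exp.2 (hM ⟨t, hτ.trans hτt, rfl⟩))
          (exp_pos _).le hC
      _ ≤ _ := le_max_right _ _

end DelaySolution

theorem stmt_16_general
    {H : Type*} [NormedAddCommGroup H] [InnerProductSpace ℂ H]
    (τ p : ℝ) (hτ : 0 < τ) (hp : 1 < p)
    (γ α : ℝ → ℝ)
    (hγc : Continuous γ)
    (hα : ∀ t, 0 ≤ α t)
    (u : ℝ → H) (u' : ℝ → H)
    (huc : ContinuousOn u (Ici (-τ)))
    (hud : ∀ t, 0 ≤ t → HasDerivWithinAt u (u' t) (Ici (0:ℝ)) t)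
    (hnd : ∀ t, 0 ≤ t → DifferentiableWithinAt ℝ (fun s => ‖u s‖) (Ici (0:ℝ)) t)
    (huineq : ∀ t, 0 ≤ t → (⟪u t, u' t⟫).re ≤
      γ t * ‖u t‖ ^ 2 + α t * ‖u t‖ * ‖u (t - τ)‖ ^ p)
    (h h' : ℝ → ℝ)
    (hh0 : ∀ t, -τ ≤ t → 0 ≤ h t)
    (hhc : ContinuousOn h (Ici (-τ)))
    (hhd : ∀ t, 0 ≤ t → HasDerivWithinAt h (h' t) (Ici (0:ℝ)) t)
    (hheq : ∀ t, 0 ≤ t → h' t = γ t * h t + α t * h (t - τ) ^ p)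
    (hinit : ∀ t, -τ ≤ t → t ≤ 0 → h t = ‖u t‖)
    (hτv : ℝ)
    (hτvdef : hτv = (‖u 0‖ + ∫ ξ in (0:ℝ)..τ,
        α ξ * nu γ ξ * ‖u (ξ - τ)‖ ^ p) / nu γ τ)
    (hτvpos : 0 < hτv)
    (I : ℝ)
    (hint : IntegrableOn (fun ξ => α ξ * sig γ τ ξ ^ p * nu γ ξ ^ (1 - p)) (Ici τ))
    (hI : I = ∫ ξ in Ici τ, α ξ * sig γ τ ξ ^ p * nu γ ξ ^ (1 - p))
    (hcond : (p - 1) * I < (hτv * nu γ τ) ^ (1 - p))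
    (hM : BddAbove {x : ℝ | ∃ t, 0 ≤ t ∧ x = ∫ ξ in (0:ℝ)..t, γ ξ}) :
    ∃ B : ℝ, ∀ t, -τ ≤ t → ‖u t‖ ≤ B := by
  have hsol : ∀ t, 0 < t → HasDerivAt h (γ t * h t + α t * h (t - τ) ^ p) t :=
    fun t ht => hheq t ht.le ▸ (hhd t ht.le).hasDerivAt (Ici_mem_nhds ht)
  have hnorm_le : ∀ t, -τ ≤ t → ‖u t‖ ≤ h t := fun t ht =>
    norm_le_of_re_inner_le_delay (𝕜 := ℂ) hτ (by linarith) hγc hα huc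
      (fun t ht => (hud t ht.le).hasDerivAt (Ici_mem_nhds ht))
      (fun t ht => (hnd t ht.le).differentiableAt (Ici_mem_nhds ht)) (fun t ht => huineq t ht.le)
      hhc hsol (fun _ _ => le_rfl) (fun t h₁ h₂ => (hinit t h₁ h₂).ge) ht
  have hτv_eq : hτv * nu γ τ = nu γ τ * h τ := by
    rw [nu_mul_eq_add_integral_of_delay hτ.le hγc hα hh0 hhc hsol, hτvdef,
      div_mul_cancel₀ _ (nu_pos γ τ).ne', hinit 0 (by linarith) le_rfl]
    congr 1
    refine intervalIntegral.integral_congr fun ξ hξ => ?_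
    rw [uIcc_of_le hτ.le] at hξ
    simp only [hinit (ξ - τ) (by linarith [hξ.1]) (by linarith [hξ.2])]
  have hpos : 0 < h τ :=
    pos_of_mul_pos_right (hτv_eq ▸ mul_pos hτvpos (nu_pos γ τ)) (nu_pos γ τ).le
  rw [hI, hτv_eq] at hcond
  obtain ⟨B, hB⟩ := exists_bound_of_nu_mul_le hτ.le hhc (rpow_nonneg (by linarith) _)
    (fun t ht => nu_mul_le_of_delay hτ hp hγc hα hh0 hhc hsol hpos hint hcond ht) hM
  exact ⟨B, fun t ht => (hnorm_le t ht).trans (hB t ht)⟩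

/-- Corollary 2.8 (Corollary 1), boundedness for the case `f = 0`: if moreover `sup_{t≥0} ∫₀ᵗ γ < ∞`, then `u` is bounded on `[−τ,∞)`. -/
theorem stmt_16
    {H : Type*} [NormedAddCommGroup H] [InnerProductSpace ℂ H]
    (τ p : ℝ) (hτ : 0 < τ) (hp : 1 < p)
    (γ α : ℝ → ℝ)
    (hγc : Continuous γ) (hαc : Continuous α)
    (hα : ∀ t, 0 ≤ α t)
    (u : ℝ → H) (u' : ℝ → H)
    (huc : ContinuousOn u (Ici (-τ)))
    (hud : ∀ t, 0 ≤ t → HasDerivWithinAt u (u' t) (Ici (0:ℝ)) t)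
    (hnd : ∀ t, 0 ≤ t → DifferentiableWithinAt ℝ (fun s => ‖u s‖) (Ici (0:ℝ)) t)
    (huineq : ∀ t, 0 ≤ t → (⟪u t, u' t⟫).re ≤
      γ t * ‖u t‖ ^ 2 + α t * ‖u t‖ * ‖u (t - τ)‖ ^ p)
    (h h' : ℝ → ℝ)
    (hh0 : ∀ t, -τ ≤ t → 0 ≤ h t)
    (hhc : ContinuousOn h (Ici (-τ)))
    (hhd : ∀ t, 0 ≤ t → HasDerivWithinAt h (h' t) (Ici (0:ℝ)) t)
    (hheq : ∀ t, 0 ≤ t → h' t = γ t * h t + α t * h (t - τ) ^ p)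
    (hinit : ∀ t, -τ ≤ t → t ≤ 0 → h t = ‖u t‖)
    (hτv : ℝ)
    (hτvdef : hτv = (‖u 0‖ + ∫ ξ in (0:ℝ)..τ,
        α ξ * nu γ ξ * ‖u (ξ - τ)‖ ^ p) / nu γ τ)
    (hτvpos : 0 < hτv)
    (I : ℝ)
    (hint : IntegrableOn (fun ξ => α ξ * sig γ τ ξ ^ p * nu γ ξ ^ (1 - p)) (Ici τ))
    (hI : I = ∫ ξ in Ici τ, α ξ * sig γ τ ξ ^ p * nu γ ξ ^ (1 - p))
    (hcond : (p - 1) * I < (hτv * nu γ τ) ^ (1 - p))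
    (hM : BddAbove {x : ℝ | ∃ t, 0 ≤ t ∧ x = ∫ ξ in (0:ℝ)..t, γ ξ}) :
    ∃ B : ℝ, ∀ t, -τ ≤ t → ‖u t‖ ≤ B :=
  stmt_16_general τ p hτ hp γ α hγc hα u u' huc hud hnd huineq h h' hh0 hhc hhd hheq hinit hτv
    hτvdef hτvpos I hint hI hcond hM
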